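/- arXiv:1602.06288 — 3 statements merged into one kernel-verified Lean document; each statement's English description precedes it below -/
import Mathlib

section
/- Let 0 < q < p ≤ 1 and n ≥ 1. For all x ∈ [0,1], the (p,q)-Bernstein basis sums to one: (1/p^{n(n-1)/2}) ∑_{k=0}^{n} C_{p,q}(n,k) p^{k(k-1)/2} x^k ∏_{s=0}^{n-k-1} (p^s - q^s x) = 1, where C_{p,q}(n,k) is the (p,q)-binomial coefficient. -/
open Finset Filter

noncomputable def pqInt (p q : ℝ) (n : ℕ) : ℝ := ∑ i ∈ Finset.range n, p ^ (n - 1 - i) * q ^ i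

noncomputable def pqFact (p q : ℝ) (n : ℕ) : ℝ := ∏ j ∈ Finset.range n, pqInt p q (j + 1)

noncomputable def pqChoose (p q : ℝ) (n k : ℕ) : ℝ :=
  pqFact p q n / (pqFact p q k * pqFact p q (n - k))

noncomputable def pqBasis (p q : ℝ) (n k : ℕ) (x : ℝ) : ℝ :=
  (1 / p ^ (n * (n - 1) / 2)) * pqChoose p q n k * p ^ (k * (k - 1) / 2) * x ^ k *
    ∏ s ∈ Finset.range (n - k), (p ^ s - q ^ s * x)

noncomputable def S (p q α β : ℝ) (n : ℕ) (f : ℝ → ℝ) (x : ℝ) : ℝ :=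
  ∑ k ∈ Finset.range (n + 1),
    pqBasis p q n k x * f ((p ^ (n - k) * pqInt p q k + α) / (pqInt p q n + β))

/-!
Clearing the factor `p ^ (n * (n - 1) / 2)`, the polynomials `b n k = pqBernstein p q n k x`
satisfy `b (n + 1) (k + 1) = u k + (p ^ n * b n (k + 1) - u (k + 1))` with
`u k = q ^ (n - k) * p ^ k * x * b n k`, a consequence of the (p,q)-Pascal rule. Summing over `k`,
the terms `u k` cancel, so `∑ k, b (n + 1) k = p ^ n * ∑ k, b n k`, and induction on `n` gives
`∑ k, b n k = p ^ (n * (n - 1) / 2)`.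
-/

section

variable (p q : ℝ)

theorem pqInt_add (a b : ℕ) : pqInt p q (a + b) = p ^ b * pqInt p q a + q ^ a * pqInt p q b := by
  simp only [pqInt, sum_range_add, mul_sum]
  congr 1 <;> refine sum_congr rfl fun i hi => ?_
  · rw [← mul_assoc, ← pow_add]
    congr 2
    have := mem_range.mp hi
    omega
  · rw [show a + b - 1 - (a + i) = b - 1 - i by omega, pow_add]
    ring

@[simp]
theorem pqFact_zero : pqFact p q 0 = 1 := prod_range_zero _

theorem pqFact_succ (n : ℕ) : pqFact p q (n + 1) = pqFact p q n * pqInt p q (n + 1) :=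
  prod_range_succ _ n

variable {p q}

theorem pqInt_pos (hp : 0 < p) (hq : 0 ≤ q) (n : ℕ) : 0 < pqInt p q (n + 1) :=
  sum_pos' (fun i _ => by positivity) ⟨0, by simp, by simp [hp]⟩

theorem pqFact_pos (hp : 0 < p) (hq : 0 ≤ q) (n : ℕ) : 0 < pqFact p q n :=
  prod_pos fun j _ => pqInt_pos hp hq j

theorem pqChoose_zero_right (hp : 0 < p) (hq : 0 ≤ q) (n : ℕ) : pqChoose p q n 0 = 1 := by
  simp [pqChoose, (pqFact_pos hp hq n).ne']

theorem pqChoose_self (hp : 0 < p) (hq : 0 ≤ q) (n : ℕ) : pqChoose p q n n = 1 := by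
  simp [pqChoose, (pqFact_pos hp hq n).ne']

theorem pqChoose_succ_succ (hp : 0 < p) (hq : 0 ≤ q) (a b : ℕ) :
    pqChoose p q (a + b + 2) (a + 1) =
      q ^ (b + 1) * pqChoose p q (a + b + 1) a +
        p ^ (a + 1) * pqChoose p q (a + b + 1) (a + 1) := by
  have hInt : pqInt p q (a + b + 2) =
      p ^ (a + 1) * pqInt p q (b + 1) + q ^ (b + 1) * pqInt p q (a + 1) := by
    rw [← pqInt_add, show b + 1 + (a + 1) = a + b + 2 by ring]
  simp only [pqChoose, show a + b + 2 - (a + 1) = b + 1 by omega,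
    show a + b + 1 - a = b + 1 by omega, show a + b + 1 - (a + 1) = b by omega, pqFact_succ, hInt]
  field_simp [(pqFact_pos hp hq _).ne', (pqInt_pos hp hq _).ne']
  ring

end

noncomputable def pqBernstein (p q : ℝ) (n k : ℕ) (x : ℝ) : ℝ :=
  pqChoose p q n k * p ^ (k * (k - 1) / 2) * x ^ k * ∏ s ∈ range (n - k), (p ^ s - q ^ s * x)

section

variable {p q : ℝ} (hp : 0 < p) (hq : 0 ≤ q) (x : ℝ)
include hp hq

theorem pqBernstein_succ_zero (n : ℕ) :
    pqBernstein p q (n + 1) 0 x =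
      p ^ n * pqBernstein p q n 0 x - q ^ n * x * pqBernstein p q n 0 x := by
  simp only [pqBernstein, pqChoose_zero_right hp hq, Nat.sub_zero, prod_range_succ]
  ring

theorem pqBernstein_succ_self (n : ℕ) :
    pqBernstein p q (n + 1) (n + 1) x = p ^ n * x * pqBernstein p q n n x := by
  simp only [pqBernstein, pqChoose_self hp hq, Nat.sub_self, prod_range_zero, Nat.triangle_succ]
  ring

theorem pqBernstein_succ_succ {n k : ℕ} (hk : k < n) :
    pqBernstein p q (n + 1) (k + 1) x =
      q ^ (n - k) * p ^ k * x * pqBernstein p q n k x +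
        (p ^ n * pqBernstein p q n (k + 1) x -
          q ^ (n - (k + 1)) * p ^ (k + 1) * x * pqBernstein p q n (k + 1) x) := by
  obtain ⟨m, rfl⟩ : ∃ m, n = k + m + 1 := ⟨n - k - 1, by omega⟩
  simp only [pqBernstein, show k + m + 1 + 1 = k + m + 2 by ring, pqChoose_succ_succ hp hq,
    show k + m + 2 - (k + 1) = m + 1 by omega, show k + m + 1 - k = m + 1 by omega,
    show k + m + 1 - (k + 1) = m by omega, prod_range_succ, Nat.triangle_succ]
  ring

theorem sum_pqBernstein (n : ℕ) :
    ∑ k ∈ range (n + 1), pqBernstein p q n k x = p ^ (n * (n - 1) / 2) := by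
  induction n with
  | zero => simp [pqBernstein, pqChoose_self hp hq]
  | succ n ih =>
    set u : ℕ → ℝ := fun k => q ^ (n - k) * p ^ k * x * pqBernstein p q n k x
    have hsplit : ∑ k ∈ range (n + 2), pqBernstein p q (n + 1) k x =
        ∑ k ∈ range (n + 1), u k + ∑ k ∈ range (n + 1), (p ^ n * pqBernstein p q n k x - u k) := by
      rw [sum_range_succ, sum_range_succ', pqBernstein_succ_self hp hq,
        pqBernstein_succ_zero hp hq,
        sum_congr rfl fun k hk => pqBernstein_succ_succ hp hq x (mem_range.mp hk), sum_add_distrib,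
        sum_range_succ u, sum_range_succ' (fun k => p ^ n * pqBernstein p q n k x - u k)]
      simp only [u, Nat.sub_self, Nat.sub_zero, pow_zero, one_mul, mul_one]
      ring
    rw [hsplit, ← sum_add_distrib]
    simp only [add_sub_cancel, ← mul_sum, ih, Nat.triangle_succ, pow_add]
    ring

end

theorem pqBasis_sum_eq_one_general (p q : ℝ) (hq : 0 < q) (hqp : q < p)
    (n : ℕ) (x : ℝ) :
    ∑ k ∈ Finset.range (n + 1), pqBasis p q n k x = 1 := by
  have hp : 0 < p := hq.trans hqp
  have hBasis (k : ℕ) :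
      pqBasis p q n k x = 1 / p ^ (n * (n - 1) / 2) * pqBernstein p q n k x := by
    simp only [pqBasis, pqBernstein]
    ring
  simp only [hBasis, ← mul_sum, sum_pqBernstein hp hq.le]
  exact one_div_mul_cancel (pow_pos hp _).ne'

theorem pqBasis_sum_eq_one (p q : ℝ) (hq : 0 < q) (hqp : q < p) (hp : p ≤ 1)
    (n : ℕ) (hn : 1 ≤ n) (x : ℝ) (hx : x ∈ Set.Icc (0 : ℝ) 1) :
    ∑ k ∈ Finset.range (n + 1), pqBasis p q n k x = 1 :=
  pqBasis_sum_eq_one_general p q hq hqp n x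
end

section
/- Let (p_n) and (q_n) be sequences with 0 < q_n < p_n ≤ 1, p_n → 1, q_n → 1, p_n^n → 1, and q_n^n → 1. Then [n]_{p_n,q_n} → ∞ as n → ∞. -/
open Finset Filter

/- Since [n]_{p,q} is increasing in p and [n]_{q,q} = n q^(n-1), for q ≤ p ≤ 1 we get
[n]_{p,q} ≥ n q^n, and n q_n^n → ∞ because q_n^n → 1. -/

theorem pqInt_self (q : ℝ) (n : ℕ) : pqInt q q n = n * q ^ (n - 1) := by
  have hterm : ∀ i ∈ range n, q ^ (n - 1 - i) * q ^ i = q ^ (n - 1) := fun i hi => by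
    rw [← pow_add, Nat.sub_add_cancel (Nat.le_sub_one_of_lt (mem_range.mp hi))]
  rw [pqInt, sum_congr rfl hterm, sum_const, card_range, nsmul_eq_mul]

theorem pqInt_mono_left {p p' q : ℝ} (hp : 0 ≤ p) (hq : 0 ≤ q) (hpp' : p ≤ p') (n : ℕ) :
    pqInt p q n ≤ pqInt p' q n :=
  sum_le_sum fun _ _ => by gcongr

theorem natCast_mul_pow_le_pqInt {p q : ℝ} (hq : 0 ≤ q) (hqp : q ≤ p) (n : ℕ) :
    n * q ^ (n - 1) ≤ pqInt p q n :=
  pqInt_self q n ▸ pqInt_mono_left hq hq hqp n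

theorem pq_int_tendsto_atTop_general (p q : ℕ → ℝ)
    (h : ∀ n, 0 < q n ∧ q n < p n ∧ p n ≤ 1)
    (hqn : Tendsto (fun n => q n ^ n) atTop (nhds 1)) :
    Tendsto (fun n => pqInt (p n) (q n) n) atTop atTop := by
  have hlower : Tendsto (fun n : ℕ => (n : ℝ) * q n ^ n) atTop atTop :=
    tendsto_natCast_atTop_atTop.atTop_mul_pos one_pos hqn
  refine tendsto_atTop_mono (fun n => ?_) hlower
  obtain ⟨hq0, hqp, hp1⟩ := h n
  calc (n : ℝ) * q n ^ n ≤ n * q n ^ (n - 1) := by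
        gcongr _ * ?_
        exact pow_le_pow_of_le_one hq0.le (hqp.le.trans hp1) (Nat.sub_le n 1)
    _ ≤ pqInt (p n) (q n) n := natCast_mul_pow_le_pqInt hq0.le hqp.le n

theorem pq_int_tendsto_atTop (p q : ℕ → ℝ)
    (h : ∀ n, 0 < q n ∧ q n < p n ∧ p n ≤ 1)
    (hp : Tendsto p atTop (nhds 1)) (hq : Tendsto q atTop (nhds 1))
    (hpn : Tendsto (fun n => p n ^ n) atTop (nhds 1))
    (hqn : Tendsto (fun n => q n ^ n) atTop (nhds 1)) :
    Tendsto (fun n => pqInt (p n) (q n) n) atTop atTop :=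
  pq_int_tendsto_atTop_general p q h hqn
end

section
/- Let (p_n), (q_n) satisfy 0 < q_n < p_n ≤ 1, p_n → 1, q_n → 1, p_n^n → 1, q_n^n → 1, and let α, β ≥ 0. Then sup_{x ∈ [0,1]} |S_{n,p_n,q_n}(t²; x) - x²| → 0 as n → ∞, where S_{n,p,q}(t²; x) = (q[n]_{p,q}[n-1]_{p,q} x² + [n]_{p,q}(2α + p^{n-1}) x + α²)/([n]_{p,q} + β)². -/
open Finset Filter

/-! The identity `q [n-1] = [n] - p^(n-1)` turns the error `S(t²; x) - x²` into
`(-([n] p^(n-1) + 2β[n] + β²) x² + [n](2α + p^(n-1)) x + α²) / ([n] + β)²`, whose numerator is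
`O([n])` uniformly on `[0,1]`. Since `[n] ≥ n p^n q^n` and `p^n q^n → 1`, `[n] → ∞`, so the
error is `O(1/[n])` uniformly. -/

theorem pqInt_succ (p q : ℝ) (m : ℕ) : pqInt p q (m + 1) = q * pqInt p q m + p ^ m := by
  simp only [pqInt]
  rw [sum_range_succ', mul_sum]
  simp only [Nat.add_sub_cancel, Nat.sub_zero, pow_zero, mul_one]
  congr 1
  refine sum_congr rfl fun i _ => ?_
  rw [show m - (i + 1) = m - 1 - i by omega]
  ring

theorem mul_pqInt_sub_one {n : ℕ} (hn : n ≠ 0) (p q : ℝ) :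
    q * pqInt p q (n - 1) = pqInt p q n - p ^ (n - 1) := by
  obtain ⟨m, rfl⟩ := Nat.exists_eq_succ_of_ne_zero hn
  rw [Nat.succ_sub_one, pqInt_succ]
  ring

theorem natCast_mul_pow_mul_pow_le_pqInt {p q : ℝ} (hp0 : 0 ≤ p) (hp1 : p ≤ 1)
    (hq0 : 0 ≤ q) (hq1 : q ≤ 1) (n : ℕ) : (n : ℝ) * (p ^ n * q ^ n) ≤ pqInt p q n := by
  have key := card_nsmul_le_sum (range n) (fun i => p ^ (n - 1 - i) * q ^ i) (p ^ n * q ^ n)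
    fun i hi => by
      have hi : i < n := mem_range.mp hi
      exact mul_le_mul (pow_le_pow_of_le_one hp0 hp1 (by omega))
        (pow_le_pow_of_le_one hq0 hq1 hi.le) (by positivity) (by positivity)
  simpa [pqInt, nsmul_eq_mul] using key

theorem tendsto_pqInt_atTop {p q : ℕ → ℝ} (hp0 : ∀ n, 0 ≤ p n) (hp1 : ∀ n, p n ≤ 1)
    (hq0 : ∀ n, 0 ≤ q n) (hq1 : ∀ n, q n ≤ 1)
    (hpn : Tendsto (fun n => p n ^ n) atTop (nhds 1))
    (hqn : Tendsto (fun n => q n ^ n) atTop (nhds 1)) :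
    Tendsto (fun n => pqInt (p n) (q n) n) atTop atTop :=
  tendsto_atTop_mono
    (fun n => natCast_mul_pow_mul_pow_le_pqInt (hp0 n) (hp1 n) (hq0 n) (hq1 n) n)
    (tendsto_natCast_atTop_atTop.atTop_mul_pos one_pos (by simpa using hpn.mul hqn))

theorem abs_second_moment_sub_sq_le {A P α β x : ℝ} (hA : 0 < A) (hP0 : 0 ≤ P) (hP1 : P ≤ 1)
    (hα : 0 ≤ α) (hβ : 0 ≤ β) (hx0 : 0 ≤ x) (hx1 : x ≤ 1) :
    |(A * (A - P) * x ^ 2 + A * (2 * α + P) * x + α ^ 2) / (A + β) ^ 2 - x ^ 2| ≤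
      (2 + 2 * α + 2 * β) / A + (α ^ 2 + β ^ 2) / A ^ 2 := by
  set a := A * P + 2 * β * A + β ^ 2
  set b := A * (2 * α + P)
  have hden : 0 < A + β := by linarith
  have herr : (A * (A - P) * x ^ 2 + A * (2 * α + P) * x + α ^ 2) / (A + β) ^ 2 - x ^ 2 =
      (-a * x ^ 2 + b * x + α ^ 2) / (A + β) ^ 2 := by
    field_simp
    ring
  have ha : 0 ≤ a := by positivity
  have hb : 0 ≤ b := by positivity
  have hx2 : x ^ 2 ≤ 1 := pow_le_one₀ hx0 hx1
  have hnum : |-a * x ^ 2 + b * x + α ^ 2| ≤ (2 + 2 * α + 2 * β) * A + (α ^ 2 + β ^ 2) := by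
    have hAP : A * P ≤ A := mul_le_of_le_one_right hA.le hP1
    rw [abs_le]
    constructor <;>
      nlinarith [mul_le_of_le_one_right ha hx2, mul_nonneg ha (sq_nonneg x),
        mul_le_of_le_one_right hb hx1, mul_nonneg hb hx0, mul_nonneg hα hA.le]
  calc |(A * (A - P) * x ^ 2 + A * (2 * α + P) * x + α ^ 2) / (A + β) ^ 2 - x ^ 2|
      = |-a * x ^ 2 + b * x + α ^ 2| / (A + β) ^ 2 := by
        rw [herr, abs_div, abs_of_pos (pow_pos hden 2)]
    _ ≤ ((2 + 2 * α + 2 * β) * A + (α ^ 2 + β ^ 2)) / A ^ 2 :=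
        div_le_div₀ (by positivity) hnum (by positivity) (by gcongr; linarith)
    _ = (2 + 2 * α + 2 * β) / A + (α ^ 2 + β ^ 2) / A ^ 2 := by
        field_simp

theorem korovkin_second_moment_general (p q : ℕ → ℝ) (α β : ℝ)
    (h : ∀ n, 0 < q n ∧ q n < p n ∧ p n ≤ 1)
    (hpn : Tendsto (fun n => p n ^ n) atTop (nhds 1))
    (hqn : Tendsto (fun n => q n ^ n) atTop (nhds 1))
    (hα : 0 ≤ α) (hβ : 0 ≤ β) :
    Tendsto (fun n => ⨆ x : Set.Icc (0 : ℝ) 1,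
      |(q n * pqInt (p n) (q n) n * pqInt (p n) (q n) (n - 1) * (x : ℝ) ^ 2 +
          pqInt (p n) (q n) n * (2 * α + (p n) ^ (n - 1)) * (x : ℝ) + α ^ 2) /
          (pqInt (p n) (q n) n + β) ^ 2 - (x : ℝ) ^ 2|)
      atTop (nhds 0) := by
  have hp0 n : 0 ≤ p n := ((h n).1.trans (h n).2.1).le
  have hq1 n : q n ≤ 1 := ((h n).2.1.trans_le (h n).2.2).le
  set A := fun n => pqInt (p n) (q n) n
  have hA : Tendsto A atTop atTop :=
    tendsto_pqInt_atTop hp0 (fun n => (h n).2.2) (fun n => (h n).1.le) hq1 hpn hqn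
  have hbound : Tendsto (fun n => (2 + 2 * α + 2 * β) / A n + (α ^ 2 + β ^ 2) / A n ^ 2)
      atTop (nhds 0) := by
    simpa using (tendsto_const_nhds.div_atTop hA).add
      (tendsto_const_nhds.div_atTop ((tendsto_pow_atTop two_ne_zero).comp hA))
  refine tendsto_of_tendsto_of_tendsto_of_le_of_le' tendsto_const_nhds hbound
    (Eventually.of_forall fun n => Real.iSup_nonneg fun x => abs_nonneg _) ?_
  filter_upwards [eventually_ne_atTop 0, hA.eventually_gt_atTop 0] with n hn hApos
  have : Nonempty (Set.Icc (0 : ℝ) 1) := ⟨⟨0, by norm_num⟩⟩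
  refine ciSup_le fun ⟨x, hx0, hx1⟩ => ?_
  have hmoment : q n * A n * pqInt (p n) (q n) (n - 1) = A n * (A n - p n ^ (n - 1)) := by
    linear_combination A n * mul_pqInt_sub_one hn (p n) (q n)
  rw [hmoment]
  exact abs_second_moment_sub_sq_le hApos (pow_nonneg (hp0 n) _)
    (pow_le_one₀ (hp0 n) (h n).2.2) hα hβ hx0 hx1

theorem korovkin_second_moment (p q : ℕ → ℝ) (α β : ℝ)
    (h : ∀ n, 0 < q n ∧ q n < p n ∧ p n ≤ 1)
    (hp : Tendsto p atTop (nhds 1)) (hq : Tendsto q atTop (nhds 1))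
    (hpn : Tendsto (fun n => p n ^ n) atTop (nhds 1))
    (hqn : Tendsto (fun n => q n ^ n) atTop (nhds 1))
    (hα : 0 ≤ α) (hβ : 0 ≤ β) :
    Tendsto (fun n => ⨆ x : Set.Icc (0 : ℝ) 1,
      |(q n * pqInt (p n) (q n) n * pqInt (p n) (q n) (n - 1) * (x : ℝ) ^ 2 +
          pqInt (p n) (q n) n * (2 * α + (p n) ^ (n - 1)) * (x : ℝ) + α ^ 2) /
          (pqInt (p n) (q n) n + β) ^ 2 - (x : ℝ) ^ 2|)
      atTop (nhds 0) :=
  korovkin_second_moment_general p q α β h hpn hqn hα hβ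
end
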